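/- Let Θ be a finite nonempty set, Φ : Δ_Θ → ℝ a differentiable entropy, and λ^Φ(μ) := Φ*(∇Φ(μ))·𝟏 − ∇Φ(μ). Then for every μ in the relative interior of Δ_Θ and every a ∈ ℝ^Θ: −Φ*(−λ^Φ(μ) − a) = inf_{μ' ∈ Δ_Θ} [⟨μ', a⟩ + D_Φ(μ', μ)]. Consequently, for a real number c, the inequality c ≤ −Φ*(−λ^Φ(μ) − a) holds if and only if c ≤ ⟨μ', a⟩ + D_Φ(μ', μ) for all μ' ∈ Δ_Θ. -/

import Mathlib

open Finset

/-- The probability simplex over a finite set `Θ`. -/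
def probSimplex (Θ : Type*) [Fintype Θ] : Set (Θ → ℝ) :=
  {μ | (∀ θ, 0 ≤ μ θ) ∧ ∑ θ, μ θ = 1}

/-- The relative interior of the probability simplex. -/
def probSimplexRI (Θ : Type*) [Fintype Θ] : Set (Θ → ℝ) :=
  {μ | (∀ θ, 0 < μ θ) ∧ ∑ θ, μ θ = 1}

/-- Standard inner product on `ℝ^Θ`. -/
noncomputable def ip {Θ : Type*} [Fintype Θ] (v w : Θ → ℝ) : ℝ := ∑ θ, v θ * w θ

/-- Convex conjugate of a function on the probability simplex:
`Φ*(v) = sup_{μ ∈ Δ_Θ} ⟨μ, v⟩ − Φ(μ)`. -/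
noncomputable def conjF {Θ : Type*} [Fintype Θ] (Φ : (Θ → ℝ) → ℝ) (v : Θ → ℝ) : ℝ :=
  sSup ((fun μ => ip μ v - Φ μ) '' probSimplex Θ)

/-- The continuous linear functional `w ↦ ⟨g, w⟩` associated with a vector `g : Θ → ℝ`;
used to express that `g` is a gradient. -/
noncomputable def toCLM {Θ : Type*} [Fintype Θ] (g : Θ → ℝ) : (Θ → ℝ) →L[ℝ] ℝ :=
  ∑ θ, g θ • (ContinuousLinearMap.proj θ : (Θ → ℝ) →L[ℝ] ℝ)

/-- Bregman divergence `D_Φ(μ', μ) = Φ(μ') − Φ(μ) − ⟨∇Φ(μ), μ' − μ⟩`, where the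
gradient of `Φ` is given by `g`. -/
noncomputable def bregDiv {Θ : Type*} [Fintype Θ] (Φ : (Θ → ℝ) → ℝ)
    (g : (Θ → ℝ) → Θ → ℝ) (μ' μ : Θ → ℝ) : ℝ :=
  Φ μ' - Φ μ - ip (g μ) (fun θ => μ' θ - μ θ)

/-- The proper loss `λ^Φ(μ) = Φ*(∇Φ(μ))·𝟏 − ∇Φ(μ)` associated with entropy `Φ`
with gradient `g`. -/
noncomputable def lamLoss {Θ : Type*} [Fintype Θ] (Φ : (Θ → ℝ) → ℝ)
    (g : (Θ → ℝ) → Θ → ℝ) (μ : Θ → ℝ) : Θ → ℝ :=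
  fun θ => conjF Φ (g μ) - g μ θ

/-- Negative Shannon entropy `(−H)(μ) = ∑ θ, μ(θ) log μ(θ)` (with `0 log 0 = 0`,
since `Real.log 0 = 0`). -/
noncomputable def negH {Θ : Type*} [Fintype Θ] (μ : Θ → ℝ) : ℝ :=
  ∑ θ, μ θ * Real.log (μ θ)

/-!
Convexity gives the gradient inequality `D_Φ(μ', μ) ≥ 0`, so `μ` attains the supremum defining
`Φ*(∇Φ(μ))`, i.e. `Φ*(∇Φ(μ)) = ⟨μ, ∇Φ(μ)⟩ − Φ(μ)`. Substituting this into `λ^Φ(μ)` and using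
`⟨μ', 𝟏⟩ = 1` on the simplex turns each term `⟨μ', −λ^Φ(μ) − a⟩ − Φ(μ')` of the supremum defining
`Φ*(−λ^Φ(μ) − a)` into `−(⟨μ', a⟩ + D_Φ(μ', μ))`. These values are bounded (again by `D_Φ ≥ 0`),
so the supremum is minus the infimum, and the second claim is the order characterisation of `sInf`.
-/

theorem ConvexOn.le_sub_of_hasFDerivWithinAt {E : Type*} [NormedAddCommGroup E]
    [NormedSpace ℝ E] {s : Set E} {f : E → ℝ} {f' : E →L[ℝ] ℝ} {x y : E}
    (hf : ConvexOn ℝ s f) (hx : x ∈ s) (hy : y ∈ s) (hf' : HasFDerivWithinAt f f' s x) :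
    f' (y - x) ≤ f y - f x := by
  set ℓ : ℝ →ᵃ[ℝ] E := AffineMap.lineMap x y
  have hℓ : HasDerivWithinAt (f ∘ ℓ) (f' (y - x)) (ℓ ⁻¹' s) 0 := by
    refine HasFDerivWithinAt.comp_hasDerivWithinAt (0 : ℝ) ?_
      AffineMap.hasDerivWithinAt_lineMap (Set.mapsTo_preimage ℓ s)
    simpa [ℓ] using hf'
  have h0 : (0 : ℝ) ∈ ℓ ⁻¹' s := by simpa [ℓ] using hx
  have h1 : (1 : ℝ) ∈ ℓ ⁻¹' s := by simpa [ℓ] using hy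
  simpa [slope_def_field, ℓ] using (hf.comp_affineMap ℓ).le_slope_of_hasDerivWithinAt h0 h1
    zero_lt_one hℓ

section Simplex

variable {Θ : Type*} [Fintype Θ]

lemma probSimplexRI_subset_probSimplex : probSimplexRI Θ ⊆ probSimplex Θ :=
  fun _ hμ => ⟨fun θ => (hμ.1 θ).le, hμ.2⟩

lemma toCLM_apply (g v : Θ → ℝ) : toCLM g v = ip g v := by
  simp [toCLM, ip]

lemma ip_comm (v w : Θ → ℝ) : ip v w = ip w v := by
  simp only [ip, mul_comm]

lemma ip_sub_right (u v w : Θ → ℝ) : ip u (v - w) = ip u v - ip u w := by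
  simp only [ip, Pi.sub_apply, mul_sub, sum_sub_distrib]

lemma ip_const_sub_right {μ : Θ → ℝ} (hμ : μ ∈ probSimplex Θ) (c : ℝ) (v : Θ → ℝ) :
    ip μ (fun θ => c - v θ) = c - ip μ v := by
  simp only [ip, mul_sub, sum_sub_distrib, ← sum_mul, hμ.2, one_mul]

lemma neg_sum_abs_le_ip {μ : Θ → ℝ} (hμ : μ ∈ probSimplex Θ) (a : Θ → ℝ) :
    -∑ θ, |a θ| ≤ ip μ a := by
  have hle_one : ∀ θ, μ θ ≤ 1 := fun θ =>
    hμ.2 ▸ single_le_sum (fun θ _ => hμ.1 θ) (mem_univ θ)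
  rw [← sum_neg_distrib]
  refine sum_le_sum fun θ _ => ?_
  nlinarith [hμ.1 θ, hle_one θ, neg_abs_le (a θ), abs_nonneg (a θ)]

variable {Φ : (Θ → ℝ) → ℝ} {gradΦ : (Θ → ℝ) → Θ → ℝ} {μ μ' : Θ → ℝ}

lemma bregDiv_eq_sub_ip :
    bregDiv Φ gradΦ μ' μ = Φ μ' - Φ μ - (ip μ' (gradΦ μ) - ip μ (gradΦ μ)) := by
  rw [bregDiv, show (fun θ => μ' θ - μ θ) = μ' - μ from rfl, ip_sub_right, ip_comm _ μ',
    ip_comm _ μ]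

lemma bregDiv_nonneg (hconv : ConvexOn ℝ (probSimplex Θ) Φ) (hμ : μ ∈ probSimplex Θ)
    (hd : HasFDerivWithinAt Φ (toCLM (gradΦ μ)) (probSimplex Θ) μ) (hμ' : μ' ∈ probSimplex Θ) :
    0 ≤ bregDiv Φ gradΦ μ' μ := by
  have h := hconv.le_sub_of_hasFDerivWithinAt hμ hμ' hd
  rw [toCLM_apply] at h
  exact sub_nonneg.2 h

lemma conjF_gradient_eq (hconv : ConvexOn ℝ (probSimplex Θ) Φ) (hμ : μ ∈ probSimplex Θ)
    (hd : HasFDerivWithinAt Φ (toCLM (gradΦ μ)) (probSimplex Θ) μ) :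
    conjF Φ (gradΦ μ) = ip μ (gradΦ μ) - Φ μ := by
  refine IsGreatest.csSup_eq ⟨⟨μ, hμ, rfl⟩, ?_⟩
  rintro _ ⟨μ', hμ', rfl⟩
  have h := bregDiv_nonneg hconv hμ hd hμ'
  rw [bregDiv_eq_sub_ip] at h
  dsimp only
  linarith

lemma ip_neg_lamLoss_sub_sub (hconv : ConvexOn ℝ (probSimplex Θ) Φ) (hμ : μ ∈ probSimplex Θ)
    (hd : HasFDerivWithinAt Φ (toCLM (gradΦ μ)) (probSimplex Θ) μ) (hμ' : μ' ∈ probSimplex Θ)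
    (a : Θ → ℝ) :
    ip μ' (-(lamLoss Φ gradΦ μ) - a) - Φ μ' = -(ip μ' a + bregDiv Φ gradΦ μ' μ) := by
  have hloss : -(lamLoss Φ gradΦ μ) - a = fun θ => -conjF Φ (gradΦ μ) - (a - gradΦ μ) θ := by
    funext θ
    simp only [lamLoss, Pi.sub_apply, Pi.neg_apply]
    ring
  rw [hloss, ip_const_sub_right hμ', ip_sub_right, conjF_gradient_eq hconv hμ hd,
    bregDiv_eq_sub_ip]
  ring

end Simplex

theorem mixability_divergence_form_general {Θ : Type*} [Fintype Θ]
    (Φ : (Θ → ℝ) → ℝ) (gradΦ : (Θ → ℝ) → Θ → ℝ)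
    (hconv : ConvexOn ℝ (probSimplex Θ) Φ)
    (hdiff : ∀ μ ∈ probSimplexRI Θ,
      HasFDerivWithinAt Φ (toCLM (gradΦ μ)) (probSimplex Θ) μ)
    (μ : Θ → ℝ) (hμ : μ ∈ probSimplexRI Θ) (a : Θ → ℝ) :
    (-conjF Φ (-(lamLoss Φ gradΦ μ) - a)
        = sInf ((fun μ' => ip μ' a + bregDiv Φ gradΦ μ' μ) '' probSimplex Θ)) ∧
      ∀ c : ℝ,
        (c ≤ -conjF Φ (-(lamLoss Φ gradΦ μ) - a)
          ↔ ∀ μ' ∈ probSimplex Θ, c ≤ ip μ' a + bregDiv Φ gradΦ μ' μ) := by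
  have hμS := probSimplexRI_subset_probSimplex hμ
  have hd := hdiff μ hμ
  set T := (fun μ' => ip μ' a + bregDiv Φ gradΦ μ' μ) '' probSimplex Θ
  have hconj_eq : -conjF Φ (-(lamLoss Φ gradΦ μ) - a) = sInf T := by
    have hneg : (fun μ' => ip μ' (-(lamLoss Φ gradΦ μ) - a) - Φ μ') '' probSimplex Θ = -T := by
      rw [← Set.image_neg_eq_neg, Set.image_image]
      exact Set.image_congr fun μ' hμ' => ip_neg_lamLoss_sub_sub hconv hμS hd hμ' a
    rw [conjF, hneg, Real.sInf_def]
  have hT_bdd : BddBelow T := by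
    refine ⟨-∑ θ, |a θ|, ?_⟩
    rintro _ ⟨μ', hμ', rfl⟩
    linarith [neg_sum_abs_le_ip hμ' a, bregDiv_nonneg hconv hμS hd hμ']
  refine ⟨hconj_eq, fun c => ?_⟩
  rw [hconj_eq, le_csInf_iff hT_bdd ⟨_, μ, hμS, rfl⟩, Set.forall_mem_image]

/-- Lemma 4 of the paper: for a differentiable entropy `Φ`,
`−Φ*(−λ^Φ(μ) − a) = inf_{μ' ∈ Δ_Θ} ⟨μ', a⟩ + D_Φ(μ', μ)`; consequently
`c ≤ −Φ*(−λ^Φ(μ) − a)` iff `c ≤ ⟨μ', a⟩ + D_Φ(μ', μ)` for all `μ' ∈ Δ_Θ`. -/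
theorem mixability_divergence_form {Θ : Type*} [Fintype Θ] [Nonempty Θ]
    (Φ : (Θ → ℝ) → ℝ) (gradΦ : (Θ → ℝ) → Θ → ℝ)
    (hconv : ConvexOn ℝ (probSimplex Θ) Φ)
    (hlsc : LowerSemicontinuousOn Φ (probSimplex Θ))
    (hdiff : ∀ μ ∈ probSimplexRI Θ,
      HasFDerivWithinAt Φ (toCLM (gradΦ μ)) (probSimplex Θ) μ)
    (μ : Θ → ℝ) (hμ : μ ∈ probSimplexRI Θ) (a : Θ → ℝ) :
    (-conjF Φ (-(lamLoss Φ gradΦ μ) - a)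
        = sInf ((fun μ' => ip μ' a + bregDiv Φ gradΦ μ' μ) '' probSimplex Θ)) ∧
      ∀ c : ℝ,
        (c ≤ -conjF Φ (-(lamLoss Φ gradΦ μ) - a)
          ↔ ∀ μ' ∈ probSimplex Θ, c ≤ ip μ' a + bregDiv Φ gradΦ μ' μ) :=
  mixability_divergence_form_general Φ gradΦ hconv hdiff μ hμ a
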